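/- Let K/k be a purely inseparable extension of characteristic p > 0. Then K/rp(K/k) is a finite extension if and only if K/k(K^p) is a finite extension. -/
import Mathlib


variable (p : ℕ) (k K : Type*) [Field k] [Field K] [Algebra k K]

open IntermediateField

/-- `k(K^{p^n})`. -/
noncomputable def kPn (n : ℕ) : IntermediateField k K :=
  IntermediateField.adjoin k (Set.range fun x : K => x ^ p ^ n)

/-- An intermediate field `E` is relatively perfect over `k` if `k(E^p) = E`. -/
def RelPerfect (E : IntermediateField k K) : Prop :=
  IntermediateField.adjoin k ((fun x : K => x ^ p) '' (E : Set K)) = E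

/-- The relative perfect closure `rp(K/k)`: the largest relatively perfect
intermediate field of `K/k`. -/
noncomputable def rpCl : IntermediateField k K :=
  sSup {E : IntermediateField k K | RelPerfect p k K E}

section Aux

variable {p k K}

/-- If `E ≤ F` and `K` is finite dimensional over `E`, it is also finite dimensional
over `F`. -/
theorem fd_of_le {E F : IntermediateField k K} (h : E ≤ F)
    (hfd : FiniteDimensional E K) : FiniteDimensional F K := by
  obtain ⟨s, hs⟩ := Module.finite_def.mp hfd
  refine ⟨⟨s, eq_top_iff.2 fun x _ => ?_⟩⟩
  clear ‹x ∈ ⊤›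
  have hx : x ∈ Submodule.span E (s : Set K) := hs ▸ Submodule.mem_top
  induction hx using Submodule.span_induction with
  | mem y hy => exact Submodule.subset_span hy
  | zero => exact zero_mem _
  | add y z _ _ hy hz => exact add_mem hy hz
  | smul a y _ hy =>
      have h2 : (⟨(a : K), h a.2⟩ : F) • y ∈ Submodule.span F (s : Set K) :=
        Submodule.smul_mem _ _ hy
      have ha : (a : ↥E) • y = (⟨(a : K), h a.2⟩ : F) • y := rfl
      rwa [ha]

theorem kPn_zero : kPn p k K 0 = ⊤ := by
  rw [eq_top_iff]
  intro x _
  exact subset_adjoin k _ ⟨x, by show x ^ p ^ 0 = x; rw [pow_zero, pow_one]⟩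

theorem kPn_antitone (n : ℕ) : kPn p k K (n + 1) ≤ kPn p k K n := by
  rw [kPn, adjoin_le_iff]
  rintro _ ⟨x, rfl⟩
  exact subset_adjoin k _ ⟨x ^ p, by show (x ^ p) ^ p ^ n = x ^ p ^ (n + 1); rw [← pow_mul, ← pow_succ']⟩

/-- The preimage of an intermediate field under the `n`-th iterated Frobenius,
as an intermediate field. -/
noncomputable def frobComap (hp : p.Prime) [CharP K p] (n : ℕ)
    (H : IntermediateField k K) : IntermediateField k K :=
  haveI : ExpChar K p := ExpChar.prime hp
  Subfield.toIntermediateField (H.toSubfield.comap (iterateFrobenius K p n))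
    (fun x => by
      show iterateFrobenius K p n (algebraMap k K x) ∈ H.toSubfield
      rw [iterateFrobenius_def, ← map_pow]
      exact H.algebraMap_mem _)

theorem mem_frobComap (hp : p.Prime) [CharP K p] (n : ℕ)
    (H : IntermediateField k K) (x : K) :
    x ∈ frobComap hp n H ↔ x ^ p ^ n ∈ H :=
  Iff.rfl

theorem kPn_succ (hp : p.Prime) [CharP K p] (n : ℕ) :
    adjoin k ((fun x : K => x ^ p) '' (kPn p k K n : Set K)) = kPn p k K (n + 1) := by
  apply le_antisymm
  · rw [adjoin_le_iff]
    rintro _ ⟨y, hy, rfl⟩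
    have hle : kPn p k K n ≤ frobComap hp 1 (kPn p k K (n + 1)) := by
      rw [kPn, adjoin_le_iff]
      rintro _ ⟨x, rfl⟩
      show x ^ p ^ n ∈ frobComap hp 1 (kPn p k K (n + 1))
      rw [mem_frobComap, pow_one, ← pow_mul, ← pow_succ]
      exact subset_adjoin k _ ⟨x, rfl⟩
    have h3 := hle hy
    rw [mem_frobComap, pow_one] at h3
    exact h3
  · rw [kPn, adjoin_le_iff]
    rintro _ ⟨x, rfl⟩
    have hx : x ^ p ^ n ∈ kPn p k K n := subset_adjoin k _ ⟨x, rfl⟩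
    show x ^ p ^ (n + 1) ∈ adjoin k ((fun x : K => x ^ p) '' (kPn p k K n : Set K))
    have heq2 : x ^ p ^ (n + 1) = (fun y : K => y ^ p) (x ^ p ^ n) := by
      show _ = (x ^ p ^ n) ^ p
      rw [← pow_mul, ← pow_succ]
    rw [heq2]
    exact subset_adjoin k _ ⟨x ^ p ^ n, hx, rfl⟩

theorem rpCl_le_kPn_one : rpCl p k K ≤ kPn p k K 1 := by
  apply sSup_le
  intro E hE
  rw [← hE]
  apply IntermediateField.adjoin.mono
  rintro _ ⟨x, _, rfl⟩
  exact ⟨x, by rw [pow_one]⟩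

theorem span_eq_top_sup {F : IntermediateField k K} {s : Set K}
    (hs : Submodule.span F s = ⊤) : F ⊔ adjoin k s = ⊤ := by
  rw [eq_top_iff]
  rintro x -
  have hx : x ∈ Submodule.span F s := hs ▸ Submodule.mem_top
  induction hx using Submodule.span_induction with
  | mem y hy => exact (le_sup_right : adjoin k s ≤ F ⊔ adjoin k s) (subset_adjoin k s hy)
  | zero => exact zero_mem _
  | add y z _ _ hy hz => exact add_mem hy hz
  | smul a y _ hy =>
      have ha : (a : ↥F) • y = (a : K) * y := by
        rw [Algebra.smul_def, IntermediateField.algebraMap_apply]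
      rw [ha]
      exact mul_mem ((le_sup_left : F ≤ F ⊔ adjoin k s) a.2) hy

theorem kPn_sup_adjoin (hp : p.Prime) [CharP K p] {s : Set K}
    (h1 : kPn p k K 1 ⊔ adjoin k s = ⊤) (n : ℕ) :
    kPn p k K n ⊔ adjoin k s = ⊤ := by
  induction n with
  | zero => rw [kPn_zero, top_sup_eq]
  | succ n ih =>
      set H := kPn p k K (n + 1) ⊔ adjoin k s with hH
      have key : ∀ x : K, x ^ p ^ n ∈ H := by
        intro x
        have htop : (⊤ : IntermediateField k K) ≤ frobComap hp n H := by
          rw [← h1]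
          apply sup_le
          · rw [kPn, adjoin_le_iff]
            rintro _ ⟨z, rfl⟩
            show z ^ p ^ 1 ∈ frobComap hp n H
            rw [mem_frobComap, pow_one, ← pow_mul, ← pow_succ']
            exact (le_sup_left : kPn p k K (n + 1) ≤ H) (subset_adjoin k _ ⟨z, rfl⟩)
          · rw [adjoin_le_iff]
            intro a ha
            show a ∈ frobComap hp n H
            rw [mem_frobComap]
            exact pow_mem ((le_sup_right : adjoin k s ≤ H) (subset_adjoin k s ha)) _
        have := htop (mem_top (x := x))
        rwa [mem_frobComap] at this
      have h2 : kPn p k K n ≤ H := by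
        rw [kPn, adjoin_le_iff]
        rintro _ ⟨x, rfl⟩
        show x ^ p ^ n ∈ H
        exact key x
      rw [eq_top_iff, ← ih]
      exact sup_le h2 le_sup_right

end Aux

/-- `K/rp(K/k)` is finite iff `K/k(K^p)` is finite. -/
theorem stmt_10 (hp : p.Prime) [CharP K p] [IsPurelyInseparable k K] :
    FiniteDimensional ↥(rpCl p k K) K ↔ FiniteDimensional ↥(kPn p k K 1) K := by
  constructor
  · intro h
    exact fd_of_le (rpCl_le_kPn_one) h
  · intro hfd
    classical
    -- a finite generating set over `k(K^p)`
    obtain ⟨s, hs⟩ := Module.finite_def.mp hfd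
    set A : IntermediateField k K := adjoin k (s : Set K) with hA
    haveI : Algebra.IsIntegral k K := IsPurelyInseparable.isIntegral
    haveI hfdA : FiniteDimensional k A :=
      finiteDimensional_adjoin (fun x _ => Algebra.IsIntegral.isIntegral x)
    haveI halgA : Algebra.IsAlgebraic k A := Algebra.IsAlgebraic.of_finite k A
    have h1 : kPn p k K 1 ⊔ A = ⊤ := span_eq_top_sup hs
    have hCn : ∀ n, kPn p k K n ⊔ A = ⊤ := fun n => kPn_sup_adjoin hp h1 n
    -- uniform bound on `[K : k(K^{p^n})]`
    have key : ∀ n, FiniteDimensional ↥(kPn p k K n) K ∧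
        Module.finrank ↥(kPn p k K n) K ≤ Module.finrank k A := by
      intro n
      have hT : adjoin ↥(kPn p k K n) (A : Set K) = ⊤ := by
        apply restrictScalars_injective k
        rw [restrictScalars_adjoin_eq_sup, adjoin_self, restrictScalars_top, hCn n]
      have hrank := adjoin_rank_le_of_isAlgebraic_right (↥(kPn p k K n)) A
      rw [hT, (topEquiv (F := ↥(kPn p k K n)) (E := K)).toLinearEquiv.rank_eq] at hrank
      have hra : Module.rank k A < Cardinal.aleph0 := Module.rank_lt_aleph0 k A
      have hKfin : Module.rank ↥(kPn p k K n) K < Cardinal.aleph0 := hrank.trans_lt hra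
      refine ⟨Module.rank_lt_aleph0_iff.1 hKfin, ?_⟩
      exact Cardinal.toNat_le_toNat hrank hra
    -- the chain `k(K^{p^n})` stabilizes
    set f : ℕ → ℕ := fun n => Module.finrank ↥(kPn p k K n) K with hf
    have hbdd : BddAbove (Set.range f) := ⟨Module.finrank k A, by
      rintro _ ⟨n, rfl⟩; exact (key n).2⟩
    obtain ⟨N, hN⟩ := Nat.sSup_mem (Set.range_nonempty f) hbdd
    have hmax : ∀ n, f n ≤ f N := fun n => by
      rw [hN]; exact le_csSup hbdd ⟨n, rfl⟩
    haveI := (key (N + 1)).1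
    have heq : kPn p k K (N + 1) = kPn p k K N :=
      eq_of_le_of_finrank_le' (kPn_antitone N) (hmax (N + 1))
    have hrp : RelPerfect p k K (kPn p k K N) := by
      rw [RelPerfect, kPn_succ hp N, heq]
    have hle : kPn p k K N ≤ rpCl p k K := le_sSup hrp
    exact fd_of_le hle (key N).1
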